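/- arXiv:1806.08192 — 3 statements merged into one kernel-verified Lean document; each statement's English description precedes it below -/
import Mathlib

section
/- Let 0 → C → A_i → B_i → 0 (i = 1, 2) be short exact sequences of finite abelian groups with inclusions ι_i : C → A_i and projections π_i : A_i → B_i, and let μ : B_1 → B_2 be an isomorphism. Suppose x_1, …, x_r ∈ A_1 together with ι_1(C) generate A_1, and y_1, …, y_r ∈ A_2 satisfy π_2(y_j) = μ(π_1(x_j)). If for every relation n_1 x_1 + ⋯ + n_r x_r + ι_1(c) = 0 generating the kernel of the natural map ℤ^r × C → A_1, there exist t_1, …, t_r ∈ C with n_1 y_1 + ⋯ + n_r y_r + ι_2(n_1 t_1 + ⋯ + n_r t_r) + ι_2(c) = 0 (with the same t_j working simultaneously for all generating relations), then there exists an isomorphism ψ : A_1 → A_2 with ψ ∘ ι_1 = ι_2 and π_2 ∘ ψ = μ ∘ π_1. -/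
/-! Replacing `yⱼ` by `yⱼ + ι₂ tⱼ`, the lifting condition says that the generating relations
of `A₁` in the generators `xⱼ`, `ι₁ c` also hold for the new generators in `A₂`, so
`xⱼ ↦ yⱼ + ι₂ tⱼ`, `ι₁ c ↦ ι₂ c` defines a homomorphism `A₁ → A₂`. It commutes with both rows,
hence is an isomorphism by the short five lemma. -/

open Finset

section Presentation

variable {J C G H : Type*} [Fintype J] [AddCommGroup C] [AddCommGroup G] [AddCommGroup H]

/-- The map `τ(m, c) = ∑ⱼ mⱼ zⱼ + ι c` of the paper. -/
def presentationMap (z : J → G) (ι : C →+ G) : (J → ℤ) × C →+ G :=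
  (Fintype.linearCombination ℤ z).toAddMonoidHom.coprod ι

@[simp]
theorem presentationMap_apply (z : J → G) (ι : C →+ G) (p : (J → ℤ) × C) :
    presentationMap z ι p = (∑ j, p.1 j • z j) + ι p.2 := by
  simp [presentationMap, Fintype.linearCombination_apply]

theorem presentationMap_surjective {z : J → G} {ι : C →+ G}
    (hz : AddSubgroup.closure (Set.range z ∪ Set.range ι) = ⊤) :
    Function.Surjective (presentationMap z ι) := by
  classical
  rw [← AddMonoidHom.range_eq_top, eq_top_iff, ← hz, AddSubgroup.closure_le]
  rintro _ (⟨j, rfl⟩ | ⟨c, rfl⟩)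
  · exact ⟨(Pi.single j 1, 0), by simp [Pi.single_apply]⟩
  · exact ⟨(0, c), by simp⟩

theorem exists_addMonoidHom_of_ker_presentationMap_le {z : J → G} {ι : C →+ G} {w : J → H}
    {κ : C →+ H} (hz : AddSubgroup.closure (Set.range z ∪ Set.range ι) = ⊤)
    (hker : (presentationMap z ι).ker ≤ (presentationMap w κ).ker) :
    ∃ ψ : G →+ H, (∀ j, ψ (z j) = w j) ∧ ∀ c, ψ (ι c) = κ c := by
  classical
  set ψ := (presentationMap z ι).liftOfSurjective (presentationMap_surjective hz)
    ⟨presentationMap w κ, hker⟩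
  have hψ (p) : ψ (presentationMap z ι p) = presentationMap w κ p :=
    AddMonoidHom.liftOfRightInverse_comp_apply _ _ _ _ p
  refine ⟨ψ, fun j => ?_, fun c => ?_⟩
  · simpa [Pi.single_apply] using hψ (Pi.single j 1, 0)
  · simpa using hψ (0, c)

end Presentation

section ShortFive

variable {C A₁ B₁ A₂ B₂ : Type*} [AddCommGroup C] [AddCommGroup A₁] [AddCommGroup B₁]
  [AddCommGroup A₂] [AddCommGroup B₂] {ι₁ : C →+ A₁} {π₁ : A₁ →+ B₁} {ι₂ : C →+ A₂}
  {π₂ : A₂ →+ B₂} {μ : B₁ →+ B₂} {ψ : A₁ →+ A₂}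

theorem injective_of_extension_map (hψι : ∀ c, ψ (ι₁ c) = ι₂ c)
    (hψπ : ∀ a, π₂ (ψ a) = μ (π₁ a)) (hex₁ : ∀ a, π₁ a = 0 ↔ a ∈ Set.range ι₁)
    (hι₂ : Function.Injective ι₂) (hμ : Function.Injective μ) : Function.Injective ψ := by
  rw [injective_iff_map_eq_zero]
  intro a ha
  have hπa : π₁ a = 0 := hμ <| by rw [← hψπ, ha, map_zero, map_zero]
  obtain ⟨c, rfl⟩ := (hex₁ a).1 hπa
  have hc : c = 0 := hι₂ <| by rw [← hψι, ha, map_zero]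
  rw [hc, map_zero]

theorem surjective_of_extension_map (hψι : ∀ c, ψ (ι₁ c) = ι₂ c)
    (hψπ : ∀ a, π₂ (ψ a) = μ (π₁ a)) (hπ₁ : Function.Surjective π₁)
    (hex₂ : ∀ a, π₂ a = 0 ↔ a ∈ Set.range ι₂) (hμ : Function.Surjective μ) :
    Function.Surjective ψ := by
  intro a₂
  obtain ⟨a₁, ha₁⟩ := (hμ.comp hπ₁) (π₂ a₂)
  obtain ⟨c, hc⟩ := (hex₂ (a₂ - ψ a₁)).1 <| by
    rw [map_sub, hψπ, ← ha₁, Function.comp_apply, sub_self]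
  exact ⟨ι₁ c + a₁, by rw [map_add, hψι, hc, sub_add_cancel]⟩

end ShortFive

theorem extension_isomorphism_of_lifting_general
    {C A₁ B₁ A₂ B₂ : Type} [AddCommGroup C] [AddCommGroup A₁] [AddCommGroup B₁]
    [AddCommGroup A₂] [AddCommGroup B₂]
    (ι₁ : C →+ A₁) (π₁ : A₁ →+ B₁) (ι₂ : C →+ A₂) (π₂ : A₂ →+ B₂)
    -- the two rows are short exact sequences
    (hπ₁ : Function.Surjective π₁)
    (hex₁ : ∀ a : A₁, π₁ a = 0 ↔ a ∈ Set.range ι₁)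
    (hι₂ : Function.Injective ι₂)
    (hex₂ : ∀ a : A₂, π₂ a = 0 ↔ a ∈ Set.range ι₂)
    (μ : B₁ ≃+ B₂)
    (r s : ℕ) (x : Fin r → A₁) (y : Fin r → A₂)
    -- `x₁, …, x_r` together with `ι₁(C)` generate `A₁`
    (hgen : AddSubgroup.closure (Set.range x ∪ Set.range ι₁) = ⊤)
    -- `π₂(y_j) = μ(π₁(x_j))`
    (hy : ∀ j : Fin r, π₂ (y j) = μ (π₁ (x j)))
    (n : Fin s → Fin r → ℤ) (c : Fin s → C)
    -- and they generate the kernel of `τ : ℤ^r × C → A₁`: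
    (hker : ∀ (m : Fin r → ℤ) (c' : C), (∑ j, m j • x j) + ι₁ c' = 0 →
      (m, c') ∈ AddSubgroup.closure (Set.range fun i : Fin s => (n i, c i)))
    -- the lifting condition, with the same `t` for all generating relations:
    (hlift : ∃ t : Fin r → C, ∀ i : Fin s,
      (∑ j, n i j • y j) + ι₂ (∑ j, n i j • t j) + ι₂ (c i) = 0) :
    ∃ ψ : A₁ ≃+ A₂, (∀ cc : C, ψ (ι₁ cc) = ι₂ cc) ∧
      (∀ a : A₁, π₂ (ψ a) = μ (π₁ a)) := by
  obtain ⟨t, ht⟩ := hlift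
  have hker_le : (presentationMap x ι₁).ker ≤ (presentationMap (y + ι₂ ∘ t) ι₂).ker := by
    rintro ⟨m, c'⟩ hm
    refine (AddSubgroup.closure_le _).2 ?_ (hker m c' hm)
    rintro _ ⟨i, rfl⟩
    simpa [smul_add, sum_add_distrib, map_sum, add_assoc] using ht i
  obtain ⟨ψ, hψx, hψι⟩ := exists_addMonoidHom_of_ker_presentationMap_le hgen hker_le
  have hπι₁ (c : C) : π₁ (ι₁ c) = 0 := (hex₁ _).2 ⟨c, rfl⟩
  have hπι₂ (c : C) : π₂ (ι₂ c) = 0 := (hex₂ _).2 ⟨c, rfl⟩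
  have hψπ (a : A₁) : π₂ (ψ a) = μ (π₁ a) := by
    refine DFunLike.congr_fun (AddMonoidHom.eq_of_eqOn_dense (f := π₂.comp ψ)
      (g := μ.toAddMonoidHom.comp π₁) hgen ?_) a
    rintro _ (⟨j, rfl⟩ | ⟨c, rfl⟩)
    · simp [hψx, hy, hπι₂]
    · simp [hψι, hπι₁, hπι₂]
  exact ⟨AddEquiv.ofBijective ψ
    ⟨injective_of_extension_map (μ := μ.toAddMonoidHom) hψι hψπ hex₁ hι₂ μ.injective,
      surjective_of_extension_map (μ := μ.toAddMonoidHom) hψι hψπ hπ₁ hex₂ μ.surjective⟩,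
    hψι, hψπ⟩

/-- Proposition 4.1 (sufficiency direction): given two extensions of finite abelian
groups by `C` and an isomorphism `μ` of the quotients, if the generating relations of
`A₁` can be simultaneously lifted (witnessed by `t : Fin r → C`), then there is an
isomorphism `ψ : A₁ → A₂` over `C` and compatible with `μ`. -/
theorem extension_isomorphism_of_lifting
    {C A₁ B₁ A₂ B₂ : Type} [AddCommGroup C] [AddCommGroup A₁] [AddCommGroup B₁]
    [AddCommGroup A₂] [AddCommGroup B₂]
    [Finite C] [Finite A₁] [Finite B₁] [Finite A₂] [Finite B₂]
    (ι₁ : C →+ A₁) (π₁ : A₁ →+ B₁) (ι₂ : C →+ A₂) (π₂ : A₂ →+ B₂)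
    -- the two rows are short exact sequences
    (hι₁ : Function.Injective ι₁) (hπ₁ : Function.Surjective π₁)
    (hex₁ : ∀ a : A₁, π₁ a = 0 ↔ a ∈ Set.range ι₁)
    (hι₂ : Function.Injective ι₂) (hπ₂ : Function.Surjective π₂)
    (hex₂ : ∀ a : A₂, π₂ a = 0 ↔ a ∈ Set.range ι₂)
    (μ : B₁ ≃+ B₂)
    (r s : ℕ) (x : Fin r → A₁) (y : Fin r → A₂)
    -- `x₁, …, x_r` together with `ι₁(C)` generate `A₁`
    (hgen : AddSubgroup.closure (Set.range x ∪ Set.range ι₁) = ⊤)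
    -- `π₂(y_j) = μ(π₁(x_j))`
    (hy : ∀ j : Fin r, π₂ (y j) = μ (π₁ (x j)))
    (n : Fin s → Fin r → ℤ) (c : Fin s → C)
    -- the `(n_i, c_i)` are relations:
    (hrel : ∀ i : Fin s, (∑ j, n i j • x j) + ι₁ (c i) = 0)
    -- and they generate the kernel of `τ : ℤ^r × C → A₁`:
    (hker : ∀ (m : Fin r → ℤ) (c' : C), (∑ j, m j • x j) + ι₁ c' = 0 →
      (m, c') ∈ AddSubgroup.closure (Set.range fun i : Fin s => (n i, c i)))
    -- the lifting condition, with the same `t` for all generating relations: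
    (hlift : ∃ t : Fin r → C, ∀ i : Fin s,
      (∑ j, n i j • y j) + ι₂ (∑ j, n i j • t j) + ι₂ (c i) = 0) :
    ∃ ψ : A₁ ≃+ A₂, (∀ cc : C, ψ (ι₁ cc) = ι₂ cc) ∧
      (∀ a : A₁, π₂ (ψ a) = μ (π₁ a)) :=
  extension_isomorphism_of_lifting_general ι₁ π₁ ι₂ π₂ hπ₁ hex₁ hι₂ hex₂ μ r s x y hgen hy n c hker
    hlift
end

section
/- Let C, A₁, A₂ be finite abelian groups with injective homomorphisms ι₁ : C → A₁ and ι₂ : C → A₂. There exists an isomorphism ψ : A₁ → A₂ with ψ ∘ ι₁ = ι₂ if and only if for every prime p there exists an isomorphism ψ_p : A₁[p^∞] → A₂[p^∞] of the p-primary components with ψ_p ∘ ι₁|_{C[p^∞]} = ι₂|_{C[p^∞]}. -/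
/-!
If every element of `G` is killed by `n ≠ 0`, then `G[p^∞]` is the `p ^ v_p(n)`-torsion of `G`,
and since these prime powers are pairwise coprime with product `n`, `G` is the internal direct
sum of its primary components `G[p^∞]`, `p ∣ n`. Taking `n = |C| |A₁| |A₂|`, the isomorphisms
`ψ_p` therefore assemble into `ψ : A₁ ≃+ A₂` restricting to `ψ_p` on each `A₁[p^∞]`, and
`ψ ∘ ι₁ = ι₂` holds because both sides agree on every `C[p^∞]`, which together span `C`.
-/

namespace DirectSum.IsInternal

variable {ι M N : Type*} [DecidableEq ι] [AddCommGroup M] [AddCommGroup N]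
  {A : ι → AddSubgroup M} {B : ι → AddSubgroup N}

theorem addMonoidHom_ext (hA : IsInternal A) {f g : M →+ N}
    (h : ∀ i, ∀ x ∈ A i, f x = g x) : f = g :=
  (AddMonoidHom.cancel_right hA.2).1 <| DirectSum.addHom_ext fun i x => by simpa using h i x x.2

noncomputable def addEquivCongr (hA : IsInternal A) (hB : IsInternal B) (e : ∀ i, A i ≃+ B i) :
    M ≃+ N :=
  (AddEquiv.ofBijective _ hA).symm.trans
    ((DFinsupp.mapRange.addEquiv e).trans (AddEquiv.ofBijective _ hB))

theorem addEquivCongr_apply_of_mem (hA : IsInternal A) (hB : IsInternal B)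
    (e : ∀ i, A i ≃+ B i) {i : ι} {x : M} (hx : x ∈ A i) :
    hA.addEquivCongr hB e x = e i ⟨x, hx⟩ := by
  have : (AddEquiv.ofBijective _ hA).symm x = DirectSum.of (fun i => A i) i ⟨x, hx⟩ :=
    (AddEquiv.ofBijective _ hA).symm_apply_eq.2 (DirectSum.coeAddMonoidHom_of A i ⟨x, hx⟩).symm
  rw [addEquivCongr, AddEquiv.trans_apply, AddEquiv.trans_apply, this]
  change DirectSum.coeAddMonoidHom B (DFinsupp.mapRange (fun i y => e i y) (fun i => map_zero _)
    (DFinsupp.single i ⟨x, hx⟩)) = _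
  rw [DFinsupp.mapRange_single]
  exact DirectSum.coeAddMonoidHom_of B i _

end DirectSum.IsInternal

namespace AddCommGroup

open scoped Function

variable {G H : Type*} [AddCommGroup G] [AddCommGroup H] {p : ℕ}

theorem map_mem_primaryComponent (f : G →+ H) {x : G} (hx : x ∈ primaryComponent G p) :
    f x ∈ primaryComponent H p :=
  hx.imp fun k hk => by rw [← map_nsmul, hk, map_zero]

theorem map_primaryComponent (e : G ≃+ H) (p : ℕ) :
    (primaryComponent G p).map e = primaryComponent H p :=
  le_antisymm
    (AddSubgroup.map_le_iff_le_comap.2 fun _ => map_mem_primaryComponent e.toAddMonoidHom)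
    fun y hy => ⟨e.symm y, map_mem_primaryComponent e.symm.toAddMonoidHom hy, e.apply_symm_apply y⟩

def _root_.AddEquiv.primaryComponentCongr (e : G ≃+ H) (p : ℕ) :
    primaryComponent G p ≃+ primaryComponent H p :=
  (e.addSubgroupMap _).trans (AddEquiv.addSubgroupCongr (map_primaryComponent e p))

theorem primaryComponent_eq_torsionBy [Fact p.Prime] {n : ℕ} (hn : n ≠ 0)
    (hG : ∀ x : G, n • x = 0) :
    primaryComponent G p =
      (Submodule.torsionBy ℤ G ((p : ℤ) ^ n.factorization p)).toAddSubgroup := by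
  ext x
  rw [Submodule.mem_toAddSubgroup, Submodule.mem_torsionBy_iff, ← Nat.cast_pow, natCast_zsmul]
  constructor
  · intro hx
    obtain ⟨k, hk⟩ := (mem_primaryComponent_iff_addOrderOf).1 hx
    have : p ^ k ∣ n := hk ▸ addOrderOf_dvd_of_nsmul_eq_zero (hG x)
    rw [← addOrderOf_dvd_iff_nsmul_eq_zero, hk]
    exact (Nat.Prime.pow_dvd_iff_dvd_ordProj Fact.out hn).1 this
  · exact fun hx => ⟨_, hx⟩

theorem isInternal_primaryComponent {n : ℕ} (hn : n ≠ 0) (hG : ∀ x : G, n • x = 0) :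
    DirectSum.IsInternal fun p : n.primeFactors => primaryComponent G p := by
  have hcop : (n.primeFactors : Set ℕ).Pairwise
      (IsCoprime on fun p : ℕ => (p : ℤ) ^ n.factorization p) := fun p hp q hq hpq =>
    (Nat.isCoprime_iff_coprime.2 <| (Nat.coprime_primes (Nat.prime_of_mem_primeFactors hp)
      (Nat.prime_of_mem_primeFactors hq)).2 hpq).pow
  have htors : Module.IsTorsionBy ℤ G (∏ p ∈ n.primeFactors, (p : ℤ) ^ n.factorization p) := by
    intro x
    have : ∏ p ∈ n.primeFactors, (p : ℤ) ^ n.factorization p = n := by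
      exact_mod_cast (Nat.prod_primeFactors_pow_factorization hn).symm
    rw [this, natCast_zsmul, hG]
  have htorsionBy := Submodule.torsionBy_isInternal hcop htors
  have hcomp : (fun p : n.primeFactors => primaryComponent G p) =
      fun p : n.primeFactors =>
        (Submodule.torsionBy ℤ G (((p : ℕ) : ℤ) ^ n.factorization p)).toAddSubgroup := by
    ext1 ⟨p, hp⟩
    have : Fact p.Prime := ⟨Nat.prime_of_mem_primeFactors hp⟩
    exact primaryComponent_eq_torsionBy hn hG
  -- `IsInternal` only sees carriers, so the statement for `ℤ`-submodules is the one for subgroups.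
  exact hcomp ▸ htorsionBy

end AddCommGroup

theorem extension_iso_iff_primary_components_general
    {C A₁ A₂ : Type} [AddCommGroup C] [AddCommGroup A₁] [AddCommGroup A₂]
    [Finite C] [Finite A₁] [Finite A₂]
    (ι₁ : C →+ A₁) (ι₂ : C →+ A₂) :
    (∃ ψ : A₁ ≃+ A₂, ∀ c : C, ψ (ι₁ c) = ι₂ c) ↔
      (∀ (p : ℕ) [Fact p.Prime],
        ∃ ψp : AddCommGroup.primaryComponent A₁ p ≃+ AddCommGroup.primaryComponent A₂ p,
          ∀ (c : C), c ∈ AddCommGroup.primaryComponent C p →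
            ∀ (h₁ : ι₁ c ∈ AddCommGroup.primaryComponent A₁ p),
              (ψp ⟨ι₁ c, h₁⟩ : A₂) = ι₂ c) := by
  refine ⟨fun ⟨ψ, hψ⟩ p _ => ⟨ψ.primaryComponentCongr p, fun c _ _ => hψ c⟩, fun h => ?_⟩
  set n := Nat.card C * Nat.card A₁ * Nat.card A₂
  have hn : n ≠ 0 := mul_ne_zero (mul_ne_zero Nat.card_pos.ne' Nat.card_pos.ne') Nat.card_pos.ne'
  have hkill {G : Type} [AddCommGroup G] [Finite G] (hG : Nat.card G ∣ n) (x : G) : n • x = 0 :=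
    addOrderOf_dvd_iff_nsmul_eq_zero.1 ((addOrderOf_dvd_natCard x).trans hG)
  have hC := AddCommGroup.isInternal_primaryComponent hn
    (hkill (dvd_mul_of_dvd_left (dvd_mul_right _ _) _))
  have hA₁ := AddCommGroup.isInternal_primaryComponent hn
    (hkill (dvd_mul_of_dvd_left (dvd_mul_left _ _) _))
  have hA₂ := AddCommGroup.isInternal_primaryComponent hn (hkill (G := A₂) (dvd_mul_left _ _))
  choose ψ hψ using fun p : n.primeFactors =>
    have : Fact (p : ℕ).Prime := ⟨Nat.prime_of_mem_primeFactors p.2⟩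
    h p
  have hcomp : (hA₁.addEquivCongr hA₂ ψ).toAddMonoidHom.comp ι₁ = ι₂ :=
    hC.addMonoidHom_ext fun p c hc =>
      have h₁ := AddCommGroup.map_mem_primaryComponent ι₁ hc
      (hA₁.addEquivCongr_apply_of_mem hA₂ ψ h₁).trans (hψ p c hc h₁)
  exact ⟨hA₁.addEquivCongr hA₂ ψ, DFunLike.congr_fun hcomp⟩

/-- Two embeddings `ι₁ : C → A₁`, `ι₂ : C → A₂` of finite abelian groups are
related by an isomorphism `ψ : A₁ ≃ A₂` with `ψ ∘ ι₁ = ι₂` if and only if, for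
every prime `p`, the induced embeddings of `p`-primary components are related by
an isomorphism `A₁[p^∞] ≃ A₂[p^∞]`. -/
theorem extension_iso_iff_primary_components
    {C A₁ A₂ : Type} [AddCommGroup C] [AddCommGroup A₁] [AddCommGroup A₂]
    [Finite C] [Finite A₁] [Finite A₂]
    (ι₁ : C →+ A₁) (ι₂ : C →+ A₂)
    (hι₁ : Function.Injective ι₁) (hι₂ : Function.Injective ι₂) :
    (∃ ψ : A₁ ≃+ A₂, ∀ c : C, ψ (ι₁ c) = ι₂ c) ↔
      (∀ (p : ℕ) [Fact p.Prime],
        ∃ ψp : AddCommGroup.primaryComponent A₁ p ≃+ AddCommGroup.primaryComponent A₂ p,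
          ∀ (c : C), c ∈ AddCommGroup.primaryComponent C p →
            ∀ (h₁ : ι₁ c ∈ AddCommGroup.primaryComponent A₁ p),
              (ψp ⟨ι₁ c, h₁⟩ : A₂) = ι₂ c) :=
  extension_iso_iff_primary_components_general ι₁ ι₂
end

section
/- Let G be a finite abelian group isomorphic to ℤ/d₁ℤ × ⋯ × ℤ/d_kℤ with d₁ | d₂ | ⋯ | d_k and d_i > 1 for all i, and suppose G embeds into (ℚ/ℤ)^g × (ℤ/2ℤ)^{m−1}. Then either k ≤ g, or g < k ≤ g + m − 1 and d₁ = ⋯ = d_{k−g} = 2. -/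
/-!
For `q, c ∈ ℕ` count the `q`-torsion elements of `c • A` on both sides of the embedding. If `q * c`
divides `d_j` for all `j` in a set `s` of indices, then `∏ ℤ/d_j` contains at least `q ^ |s|` of
them (coordinatewise, the multiples of `d_j / q`), whereas `(ℚ/ℤ)^g × (ℤ/2)^r` contains at most
`q^g 2^r`, and at most `q^g` when `q` is odd or `c` is even, because then the `(ℤ/2)^r`-component
vanishes. Taking `q = d₁`, `c = 1` and all indices gives `k ≤ g + r`. If `d_i > 2`, write
`d_i = q c` with `q > 1` and either `q` odd or `c = 2`; taking `s = {i, …, k}` gives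
`k - i + 1 ≤ g`.
-/

open Finset

theorem Set.encard_univ_pi {ι : Type*} [Fintype ι] {α : ι → Type*} {s : ∀ i, Set (α i)}
    (hs : ∀ i, (s i).Finite) : (Set.univ.pi s).encard = ∏ i, (s i).encard := by
  have := fun i => (hs i).to_subtype
  simp only [Set.encard, ENat.card_congr (Equiv.Set.univPi s), ENat.card_eq_coe_natCard,
    Nat.card_pi, Nat.cast_prod]

def multiplesTorsion (A : Type*) [AddCommGroup A] (c q : ℕ) : Set A :=
  {a | (∃ b, c • b = a) ∧ q • a = 0}

section multiplesTorsion

variable {A B : Type*} [AddCommGroup A] [AddCommGroup B] {c q : ℕ}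

theorem multiplesTorsion_pi {ι : Type*} {M : ι → Type*} [∀ i, AddCommGroup (M i)] :
    multiplesTorsion (∀ i, M i) c q = Set.univ.pi fun i => multiplesTorsion (M i) c q := by
  ext x
  simp [multiplesTorsion, funext_iff, Classical.skolem, forall_and]

theorem multiplesTorsion_prod :
    multiplesTorsion (A × B) c q = multiplesTorsion A c q ×ˢ multiplesTorsion B c q := by
  ext x
  simp only [multiplesTorsion, Prod.ext_iff, Prod.smul_fst, Prod.smul_snd, Prod.exists,
    exists_and_left, exists_and_right, Prod.fst_zero, Prod.snd_zero, Set.mem_ofPred_eq,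
    Set.mem_prod]
  tauto

theorem image_multiplesTorsion_subset (φ : A →+ B) :
    φ '' multiplesTorsion A c q ⊆ multiplesTorsion B c q := by
  rintro _ ⟨a, ⟨⟨b, rfl⟩, ha⟩, rfl⟩
  exact ⟨⟨φ b, (map_nsmul φ c b).symm⟩, by rw [← map_nsmul, ha, map_zero]⟩

theorem multiplesTorsion_subset_zero (hB : ∀ b : B, 2 • b = 0) (h : Odd q ∨ Even c) :
    multiplesTorsion B c q ⊆ {0} := by
  rintro _ ⟨⟨b, rfl⟩, hq⟩
  have hmod {n : ℕ} (x : B) : n • x = (n % 2) • x := nsmul_eq_mod_nsmul n (hB x)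
  rcases h with h | h
  · rwa [hmod, Nat.odd_iff.mp h, one_nsmul] at hq
  · rw [Set.mem_singleton_iff, hmod, Nat.even_iff.mp h, zero_nsmul]

end multiplesTorsion

theorem ZMod.le_encard_multiplesTorsion {d c q : ℕ} [NeZero d] (h : q * c ∣ d) :
    q ≤ (multiplesTorsion (ZMod d) c q).encard := by
  obtain ⟨r, rfl⟩ := h
  have hcr : c * r ≠ 0 := by
    have := NeZero.ne (q * c * r)
    rw [mul_assoc] at this
    exact right_ne_zero_of_mul this
  set a : ZMod (q * c * r) := ((c * r : ℕ) : ZMod (q * c * r))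
  have hq : q • a = 0 := by
    rw [nsmul_eq_mul, ← Nat.cast_mul, ← mul_assoc, ZMod.natCast_self]
  have hsub : (AddSubgroup.zmultiples a : Set (ZMod (q * c * r))) ⊆
      multiplesTorsion (ZMod (q * c * r)) c q := by
    rintro _ ⟨n, rfl⟩
    refine ⟨⟨n • (r : ZMod (q * c * r)), ?_⟩, by rw [smul_comm, hq, smul_zero]⟩
    simp only [a, Nat.cast_mul, ← nsmul_eq_mul]
    exact (smul_comm n c (r : ZMod (q * c * r))).symm
  have horder : addOrderOf a = q := by
    rw [ZMod.addOrderOf_coe _ (NeZero.ne _), mul_assoc,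
      Nat.gcd_eq_right (dvd_mul_left _ _), Nat.mul_div_cancel _ (Nat.pos_of_ne_zero hcr)]
  calc (q : ℕ∞) = (AddSubgroup.zmultiples a : Set (ZMod (q * c * r))).encard := by
        rw [Set.encard, ENat.card_eq_coe_natCard, SetLike.coe_sort_coe, Nat.card_zmultiples,
          horder]
    _ ≤ _ := Set.encard_le_encard hsub

theorem pow_card_le_encard_multiplesTorsion_pi {ι : Type*} [Fintype ι] (d : ι → ℕ)
    [∀ i, NeZero (d i)] {c q : ℕ} (s : Finset ι) (hs : ∀ i ∈ s, q * c ∣ d i) :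
    q ^ #s ≤ (multiplesTorsion (∀ i, ZMod (d i)) c q).encard := by
  rw [multiplesTorsion_pi, Set.encard_univ_pi fun _ => Set.toFinite _]
  calc (q : ℕ∞) ^ #s = ∏ i ∈ s, (q : ℕ∞) := (Finset.prod_const _).symm
    _ ≤ ∏ i ∈ s, (multiplesTorsion (ZMod (d i)) c q).encard :=
      Finset.prod_le_prod' fun i hi => ZMod.le_encard_multiplesTorsion (hs i hi)
    _ ≤ ∏ i, (multiplesTorsion (ZMod (d i)) c q).encard :=
      Finset.prod_le_prod_of_subset_of_one_le' (Finset.subset_univ s) fun i _ _ =>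
        Set.one_le_encard_iff_nonempty.mpr ⟨0, ⟨0, smul_zero c⟩, smul_zero q⟩

section AddCircle

variable {𝕜 : Type*} [AddCommGroup 𝕜] [LinearOrder 𝕜] [IsOrderedAddMonoid 𝕜] (p : 𝕜)
  {ι : Type*} [Fintype ι] {c q : ℕ}

theorem AddCircle.encard_multiplesTorsion_pi_le (hq : q ≠ 0) :
    (multiplesTorsion (ι → AddCircle p) c q).encard ≤ q ^ Fintype.card ι := by
  have hsub : multiplesTorsion (AddCircle p) c q ⊆ {u | q • u = 0} := fun _ h => h.2
  rw [multiplesTorsion_pi,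
    Set.encard_univ_pi fun _ => (finite_torsion p (Nat.pos_of_ne_zero hq)).subset hsub]
  refine Finset.prod_le_pow_card _ _ _ fun _ _ => (Set.encard_le_encard hsub).trans ?_
  exact card_torsion_le_of_isSMulRegular p q hq <|
    .of_right_eq_zero_of_smul fun _ ↦ by simp [hq]

variable {B : Type*} [AddCommGroup B]

theorem AddCircle.encard_multiplesTorsion_prod_le (hq : q ≠ 0) :
    (multiplesTorsion ((ι → AddCircle p) × B) c q).encard ≤
      q ^ Fintype.card ι * ENat.card B := by
  rw [multiplesTorsion_prod, Set.encard_prod]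
  exact mul_le_mul' (encard_multiplesTorsion_pi_le p hq) Set.encard_le_card

theorem AddCircle.encard_multiplesTorsion_prod_le_of_two_nsmul (hq : q ≠ 0)
    (hB : ∀ b : B, 2 • b = 0) (h : Odd q ∨ Even c) :
    (multiplesTorsion ((ι → AddCircle p) × B) c q).encard ≤ q ^ Fintype.card ι := by
  rw [multiplesTorsion_prod, Set.encard_prod]
  calc _ ≤ (multiplesTorsion (ι → AddCircle p) c q).encard * ({0} : Set B).encard :=
        mul_le_mul' le_rfl (Set.encard_le_encard (multiplesTorsion_subset_zero hB h))
    _ ≤ q ^ Fintype.card ι := by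
        rw [Set.encard_singleton, mul_one]
        exact encard_multiplesTorsion_pi_le p hq

end AddCircle

theorem exists_one_lt_mul_eq_of_two_lt {n : ℕ} (hn : 2 < n) :
    ∃ q c, 1 < q ∧ (Odd q ∨ Even c) ∧ q * c = n := by
  rcases Nat.even_or_odd n with ⟨r, hr⟩ | hodd
  · exact ⟨r, 2, by omega, Or.inr even_two, by omega⟩
  · exact ⟨n, 1, by omega, Or.inl hodd, mul_one n⟩

section Embedding

variable {𝕜 : Type*} [AddCommGroup 𝕜] [LinearOrder 𝕜] [IsOrderedAddMonoid 𝕜] (p : 𝕜)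
  {ι κ ι' : Type*} [Fintype ι] [Fintype ι'] {d : ι' → ℕ} [∀ i, NeZero (d i)]
  {c q : ℕ} {s : Finset ι'}

theorem pow_card_le_encard_multiplesTorsion_of_injective {B : Type*} [AddCommGroup B]
    (φ : (∀ i, ZMod (d i)) →+ B) (hφ : Function.Injective φ) (hs : ∀ i ∈ s, q * c ∣ d i) :
    q ^ #s ≤ (multiplesTorsion B c q).encard :=
  calc (q : ℕ∞) ^ #s ≤ (multiplesTorsion (∀ i, ZMod (d i)) c q).encard :=
        pow_card_le_encard_multiplesTorsion_pi d s hs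
    _ = (φ '' multiplesTorsion (∀ i, ZMod (d i)) c q).encard := (hφ.encard_image _).symm
    _ ≤ _ := Set.encard_le_encard (image_multiplesTorsion_subset φ)

theorem card_le_card_add_card_of_zmodPi_injective [Fintype κ]
    (φ : (∀ i, ZMod (d i)) →+ (ι → AddCircle p) × (κ → ZMod 2)) (hφ : Function.Injective φ)
    (hq : 1 < q) (hs : ∀ i ∈ s, q * c ∣ d i) :
    #s ≤ Fintype.card ι + Fintype.card κ := by
  have h := (pow_card_le_encard_multiplesTorsion_of_injective φ hφ hs).trans
    (AddCircle.encard_multiplesTorsion_prod_le p (c := c) (by omega))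
  simp only [ENat.card_fun, ENat.card_eq_coe_fintype_card, ZMod.card] at h
  rw [← Nat.pow_le_pow_iff_right hq]
  calc q ^ #s ≤ q ^ Fintype.card ι * 2 ^ Fintype.card κ := by exact_mod_cast h
    _ ≤ q ^ Fintype.card ι * q ^ Fintype.card κ :=
      Nat.mul_le_mul_left _ (Nat.pow_le_pow_left hq _)
    _ = q ^ (Fintype.card ι + Fintype.card κ) := (pow_add _ _ _).symm

theorem card_le_card_of_zmodPi_injective
    (φ : (∀ i, ZMod (d i)) →+ (ι → AddCircle p) × (κ → ZMod 2)) (hφ : Function.Injective φ)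
    (hq : 1 < q) (hqc : Odd q ∨ Even c) (hs : ∀ i ∈ s, q * c ∣ d i) : #s ≤ Fintype.card ι := by
  rw [← Nat.pow_le_pow_iff_right hq]
  exact_mod_cast (pow_card_le_encard_multiplesTorsion_of_injective φ hφ hs).trans
    (AddCircle.encard_multiplesTorsion_prod_le_of_two_nsmul p (by omega)
      (fun b => funext fun i => CharTwo.two_nsmul (b i)) hqc)

end Embedding

theorem invariant_factors_of_embedding_general
    {G : Type} [AddCommGroup G]
    (k g m : ℕ) (d : Fin k → ℕ)
    (hd1 : ∀ i, 1 < d i)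
    (hdvd : ∀ i j : Fin k, i ≤ j → d i ∣ d j)
    (e : G ≃+ ∀ i : Fin k, ZMod (d i))
    (f : G →+ (Fin g → AddCircle (1 : ℚ)) × (Fin (m - 1) → ZMod 2))
    (hf : Function.Injective f) :
    k ≤ g ∨ (g < k ∧ k ≤ g + m - 1 ∧ ∀ i : Fin k, (i : ℕ) < k - g → d i = 2) := by
  have := fun i => NeZero.of_pos (zero_lt_one.trans (hd1 i))
  have hφ : Function.Injective (f.comp e.symm.toAddMonoidHom) := hf.comp e.symm.injective
  rcases le_or_gt k g with hkg | hgk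
  · exact Or.inl hkg
  have hk : 0 < k := by omega
  refine Or.inr ⟨hgk, ?_, fun i hi => ?_⟩
  · have := card_le_card_add_card_of_zmodPi_injective _ _ hφ (s := Finset.univ) (c := 1)
      (hd1 ⟨0, hk⟩) fun j _ => (mul_one (d _)).symm ▸ hdvd _ j (Nat.zero_le (j : ℕ))
    simp only [Finset.card_univ, Fintype.card_fin] at this
    omega
  · have hs : g < #(Finset.Ici i) := by rw [Fin.card_Ici]; omega
    by_contra hne
    obtain ⟨q, c, hq, hqc, hdi⟩ :=
      exists_one_lt_mul_eq_of_two_lt (n := d i) (by have := hd1 i; omega)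
    have := card_le_card_of_zmodPi_injective _ _ hφ hq hqc fun j hj =>
      hdi ▸ hdvd i j (Finset.mem_Ici.mp hj)
    rw [Fintype.card_fin] at this
    omega

/-- If `G ≅ ℤ/d₁ × ⋯ × ℤ/d_k` with `d₁ ∣ d₂ ∣ ⋯ ∣ d_k` and all `d_i > 1`
embeds into `(ℚ/ℤ)^g × (ℤ/2ℤ)^{m−1}`, then either `k ≤ g`, or
`g < k ≤ g + m − 1` and `d₁ = ⋯ = d_{k−g} = 2`. -/
theorem invariant_factors_of_embedding
    {G : Type} [AddCommGroup G] [Finite G]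
    (k g m : ℕ) (d : Fin k → ℕ)
    (hd1 : ∀ i, 1 < d i)
    (hdvd : ∀ i j : Fin k, i ≤ j → d i ∣ d j)
    (e : G ≃+ ∀ i : Fin k, ZMod (d i))
    (f : G →+ (Fin g → AddCircle (1 : ℚ)) × (Fin (m - 1) → ZMod 2))
    (hf : Function.Injective f) :
    k ≤ g ∨ (g < k ∧ k ≤ g + m - 1 ∧ ∀ i : Fin k, (i : ℕ) < k - g → d i = 2) :=
  invariant_factors_of_embedding_general k g m d hd1 hdvd e f hf
end
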